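/- arXiv:2506.01081 — 3 statements merged into one kernel-verified Lean document; each statement's English description precedes it below -/
import Mathlib

section
/- Let u_{k−m}, …, u_k ∈ ℝⁿ, set S_k = [u_{k−m+1}−u_{k−m}, …, u_k−u_{k−1}, q(u_k)−u_k] ∈ ℝ^{n×(m+1)}, and assume A S_k has full column rank. Let u_{k+1} be produced by a single NGMRES(m) step from u_{k−m}, …, u_k and set W_k = S_k (S_kᵀ Aᵀ A S_k)⁻¹ S_kᵀ Aᵀ. Then e_{k+1} = (I − W_k A) M e_k and r_{k+1} = (I − A W_k) M r_k. -/
/-!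
The residual is affine in `u`, so the NGMRES objective equals `‖r(q(u_k)) + A S_k T β‖`, where
`T` is the invertible anti-triangular matrix of ones that writes each `q(u_k) - u_{k-i}` as a
telescoping sum of columns of `S_k`. Hence `γ = T β` satisfies the normal equations of the
full-column-rank least-squares problem `min_γ ‖r(q(u_k)) + A S_k γ‖`, i.e.
`u_{k+1} = q(u_k) - W_k r(q(u_k))`. Substituting `q(u_k) - u* = M e_k` and `r(q(u_k)) = A M e_k`
gives the error recursion, and `A (I - W_k A) = (I - A W_k) A` turns it into the residual one.
-/

open Matrix Polynomial Set

noncomputable section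

/-- Matrix–vector product, landing in Euclidean space. -/
def mulVecE {n : ℕ} (M : Matrix (Fin n) (Fin n) ℝ) (v : EuclideanSpace ℝ (Fin n)) :
    EuclideanSpace ℝ (Fin n) :=
  WithLp.toLp 2 (M.mulVec v)

/-- Residual `r(u) = A u - b`. -/
def res {n : ℕ} (A : Matrix (Fin n) (Fin n) ℝ) (b u : EuclideanSpace ℝ (Fin n)) :
    EuclideanSpace ℝ (Fin n) :=
  mulVecE A u - b

/-- Richardson fixed-point map `q(u) = (I - A) u + b = M u + b` with `M = I - A`. -/
def fp {n : ℕ} (A : Matrix (Fin n) (Fin n) ℝ) (b u : EuclideanSpace ℝ (Fin n)) :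
    EuclideanSpace ℝ (Fin n) :=
  mulVecE (1 - A) u + b

/-- The NGMRES(m) least-squares objective at step `k`:
`β ↦ ‖r(q(u_k)) + Σ_{i=0}^m β_i (r(q(u_k)) - r(u_{k-i}))‖`. -/
def ngObj {n : ℕ} (A : Matrix (Fin n) (Fin n) ℝ) (b : EuclideanSpace ℝ (Fin n))
    (m : ℕ) (prev : ℕ → EuclideanSpace ℝ (Fin n)) (k : ℕ) (β : Fin (m+1) → ℝ) : ℝ :=
  ‖res A b (fp A b (prev k)) +
    ∑ i : Fin (m+1), β i • (res A b (fp A b (prev k)) - res A b (prev (k - (i : ℕ))))‖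

/-- `next` is produced from `prev (k-m), …, prev k` by a single NGMRES(m) step:
`next = q(u_k) + Σ_{i=0}^m β_i (q(u_k) - u_{k-i})` where `β` minimizes the
least-squares objective `ngObj`. -/
def NGMRESStep {n : ℕ} (A : Matrix (Fin n) (Fin n) ℝ) (b : EuclideanSpace ℝ (Fin n))
    (m : ℕ) (prev : ℕ → EuclideanSpace ℝ (Fin n)) (k : ℕ)
    (next : EuclideanSpace ℝ (Fin n)) : Prop :=
  ∃ β : Fin (m+1) → ℝ,
    (∀ γ : Fin (m+1) → ℝ, ngObj A b m prev k β ≤ ngObj A b m prev k γ) ∧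
    next = fp A b (prev k) +
      ∑ i : Fin (m+1), β i • (fp A b (prev k) - prev (k - (i : ℕ)))

/-- The spectral (ℓ²-operator) norm of a matrix. -/
def opNorm {n : ℕ} (M : Matrix (Fin n) (Fin n) ℝ) : ℝ :=
  ‖(Matrix.toEuclideanCLM (𝕜 := ℝ) M : EuclideanSpace ℝ (Fin n) →L[ℝ] EuclideanSpace ℝ (Fin n))‖

/-- The 2-norm condition number `κ₂(U) = ‖U‖ ‖U⁻¹‖`. -/
def condNum {n : ℕ} (U : Matrix (Fin n) (Fin n) ℝ) : ℝ :=
  opNorm U * opNorm U⁻¹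

/-- `ε(a,b,s)`: minimum over real polynomials `p` of degree at most `s` with `p(1) = 1`
of `max_{t ∈ [1/b, 1/a]} |p(t)|`. -/
def eps (a b : ℝ) (s : ℕ) : ℝ :=
  sInf {t : ℝ | ∃ p : Polynomial ℝ, p.natDegree ≤ s ∧ p.eval 1 = 1 ∧
    t = sSup ((fun x => |p.eval x|) '' Set.Icc (1/b) (1/a))}

/-- `χ(s)`: minimum over real polynomials `p` of degree at most `s` with `p(1) = 1`
of `max_{λ ∈ Σ(M)} |p(λ)|`, where `Σ(M)` is the set of eigenvalues of `M`. -/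
def chiSp {n : ℕ} (M : Matrix (Fin n) (Fin n) ℝ) (s : ℕ) : ℝ :=
  sInf {t : ℝ | ∃ p : Polynomial ℝ, p.natDegree ≤ s ∧ p.eval 1 = 1 ∧
    t = sSup ((fun x => |p.eval x|) '' spectrum ℝ M)}

/-- The Krylov subspace `K_k(A, r) = span{r, Ar, …, A^{k-1} r}`. -/
def Krylov {n : ℕ} (A : Matrix (Fin n) (Fin n) ℝ) (r : EuclideanSpace ℝ (Fin n)) (k : ℕ) :
    Submodule ℝ (EuclideanSpace ℝ (Fin n)) :=
  Submodule.span ℝ (Set.range fun i : Fin k => mulVecE (A ^ (i : ℕ)) r)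

/-- The matrix `S_k = [u_{k-m+1}-u_{k-m}, …, u_k-u_{k-1}, q(u_k)-u_k] ∈ ℝ^{n×(m+1)}`. -/
def Smat {n : ℕ} (A : Matrix (Fin n) (Fin n) ℝ) (b : EuclideanSpace ℝ (Fin n))
    (prev : ℕ → EuclideanSpace ℝ (Fin n)) (k m : ℕ) :
    Matrix (Fin n) (Fin (m+1)) ℝ :=
  Matrix.of fun r c =>
    if (c : ℕ) < m then prev (k - m + c + 1) r - prev (k - m + c) r
    else fp A b (prev k) r - prev k r

/-- `u` is the sequence of aNGMRES(m, p) iterates (with `m = ⊤` giving aNGMRES(∞, p)):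
if `p ∤ k` then `u_k = q(u_{k-1})`, and if `p ∣ k` then `u_k` is produced by one
NGMRES(min(m, k-1)) step from `u_{k-1-m_k}, …, u_{k-1}`. -/
def aNGMRES {n : ℕ} (A : Matrix (Fin n) (Fin n) ℝ) (b : EuclideanSpace ℝ (Fin n))
    (m : ℕ∞) (p : ℕ) (u : ℕ → EuclideanSpace ℝ (Fin n)) : Prop :=
  ∀ k, 1 ≤ k →
    (¬ p ∣ k → u k = fp A b (u (k-1))) ∧
    (p ∣ k → NGMRESStep A b (min m ((k : ℕ∞) - 1)).toNat u (k-1) (u k))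

open scoped InnerProductSpace

theorem inner_eq_zero_of_forall_norm_le_norm_add_smul {E : Type*} [NormedAddCommGroup E]
    [InnerProductSpace ℝ E] {z w : E} (h : ∀ t : ℝ, ‖z‖ ≤ ‖z + t • w‖) :
    ⟪z, w⟫_ℝ = 0 := by
  have hquad : ∀ t : ℝ, 0 ≤ ‖w‖ ^ 2 * (t * t) + 2 * ⟪z, w⟫_ℝ * t + 0 := fun t => by
    have hsq := pow_le_pow_left₀ (norm_nonneg z) (h t) 2
    rw [norm_add_sq_real, real_inner_smul_right, norm_smul, Real.norm_eq_abs, mul_pow, sq_abs]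
      at hsq
    nlinarith
  have := discrim_le_zero hquad
  rw [discrim] at this
  nlinarith [sq_nonneg ⟪z, w⟫_ℝ]

namespace Matrix

section LeastSquares

variable {m ι : Type*} [Fintype m] [Fintype ι] [DecidableEq ι]

theorem transpose_mulVec_eq_zero_of_forall_norm_le (B : Matrix m ι ℝ) (v : m → ℝ)
    (β : ι → ℝ)
    (h : ∀ γ, ‖WithLp.toLp 2 (v + B *ᵥ β)‖ ≤ ‖WithLp.toLp 2 (v + B *ᵥ γ)‖) :
    Bᵀ *ᵥ (v + B *ᵥ β) = 0 := by
  ext j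
  have horth := inner_eq_zero_of_forall_norm_le_norm_add_smul
    (z := WithLp.toLp 2 (v + B *ᵥ β)) (w := WithLp.toLp 2 (B *ᵥ Pi.single j 1)) fun t => by
      have := h (β + t • Pi.single j 1)
      rwa [mulVec_add, mulVec_smul, ← add_assoc] at this
  rw [EuclideanSpace.inner_toLp_toLp, mulVec_single_one, star_trivial] at horth
  rw [mulVec_transpose, Pi.zero_apply, ← horth, dotProduct_comm]
  rfl

theorem isUnit_transpose_mul_self_of_rank_eq_card (B : Matrix m ι ℝ)
    (h : B.rank = Fintype.card ι) : IsUnit (Bᵀ * B) := by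
  rw [← mulVec_surjective_iff_isUnit]
  change Function.Surjective (Bᵀ * B).mulVecLin
  rw [← LinearMap.range_eq_top]
  apply Submodule.eq_top_of_finrank_eq
  rw [← rank, rank_transpose_mul_self, h, Module.finrank_fintype_fun_eq_card]

theorem eq_neg_inv_mulVec_of_transpose_mulVec_eq_zero {B : Matrix m ι ℝ}
    (hB : IsUnit (Bᵀ * B)) {v : m → ℝ} {γ : ι → ℝ} (h : Bᵀ *ᵥ (v + B *ᵥ γ) = 0) :
    γ = -((Bᵀ * B)⁻¹ * Bᵀ) *ᵥ v := by
  rw [mulVec_add, mulVec_mulVec, add_eq_zero_iff_eq_neg] at h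
  rw [neg_mulVec, ← mulVec_mulVec, h, mulVec_neg, neg_neg, mulVec_mulVec,
    nonsing_inv_mul _ ((isUnit_iff_isUnit_det _).mp hB), one_mulVec]

end LeastSquares

variable {R : Type*}

theorem of_sub_mulVec_indicator [Ring R] {m : Type*} (g : ℕ → m → R) {p j : ℕ}
    (hj : j ≤ p) :
    (of fun r (c : Fin p) => g (c + 1) r - g c r) *ᵥ (fun c => if j ≤ (c : ℕ) then 1 else 0) =
      g p - g j := by
  ext r
  simp only [mulVec, dotProduct, of_apply, mul_ite, mul_one, mul_zero, Pi.sub_apply]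
  rw [Fin.sum_univ_eq_sum_range (fun c => if j ≤ c then g (c + 1) r - g c r else 0),
    ← Finset.sum_filter, ← Finset.sum_Ico_sub (fun c => g c r) hj]
  congr 1
  ext c
  simp only [Finset.mem_filter, Finset.mem_range, Finset.mem_Ico]
  omega

def antiTriangularOnes (R : Type*) [Zero R] [One R] (p : ℕ) : Matrix (Fin p) (Fin p) R :=
  of fun c i => if Fin.rev i ≤ c then 1 else 0

theorem isUnit_antiTriangularOnes [CommRing R] (p : ℕ) : IsUnit (antiTriangularOnes R p) := by
  let L : Matrix (Fin p) (Fin p) R := of fun c i => if i ≤ c then 1 else 0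
  have hL : L.IsLowerTriangular := fun c i hci => if_neg (not_le.mpr hci)
  have hT : antiTriangularOnes R p = L.submatrix id Fin.revPerm := rfl
  rw [isUnit_iff_isUnit_det, hT, det_permute', det_of_isLowerTriangular L hL]
  simpa [L] using (Equiv.Perm.sign Fin.revPerm).isUnit.map (Int.castRingHom R)

end Matrix

section NGMRES

variable {n m k : ℕ} (A : Matrix (Fin n) (Fin n) ℝ) (b : EuclideanSpace ℝ (Fin n))

@[simp]
theorem ofLp_mulVecE (M : Matrix (Fin n) (Fin n) ℝ) (v : EuclideanSpace ℝ (Fin n)) :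
    (mulVecE M v).ofLp = M *ᵥ v.ofLp :=
  rfl

theorem mulVecE_mul (M N : Matrix (Fin n) (Fin n) ℝ) (v : EuclideanSpace ℝ (Fin n)) :
    mulVecE (M * N) v = mulVecE M (mulVecE N v) := by
  simp [mulVecE, mulVec_mulVec]

theorem res_sub_res (u w : EuclideanSpace ℝ (Fin n)) :
    res A b u - res A b w = mulVecE A (u - w) := by
  apply WithLp.ofLp_injective
  simp [res, mulVec_sub]

variable {A b} {ustar : EuclideanSpace ℝ (Fin n)}

theorem res_eq_mulVecE_sub (h : mulVecE A ustar = b) (u : EuclideanSpace ℝ (Fin n)) :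
    res A b u = mulVecE A (u - ustar) := by
  rw [← res_sub_res, show res A b ustar = 0 from sub_eq_zero.mpr h, sub_zero]

theorem fp_sub_eq_mulVecE_sub (h : mulVecE A ustar = b) (u : EuclideanSpace ℝ (Fin n)) :
    fp A b u - ustar = mulVecE (1 - A) (u - ustar) := by
  apply WithLp.ofLp_injective
  simp [fp, ← h, sub_mulVec, mulVec_sub]
  abel

theorem Smat_mul_antiTriangularOnes_mulVec (prev : ℕ → EuclideanSpace ℝ (Fin n))
    (hmk : m ≤ k) (β : Fin (m + 1) → ℝ) :
    (Smat A b prev k m * antiTriangularOnes ℝ (m + 1)) *ᵥ β =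
      (∑ i : Fin (m + 1), β i • (fp A b (prev k) - prev (k - i))).ofLp := by
  -- the columns of `S_k` are the successive differences of `u_{k-m}, …, u_k, q(u_k)`
  set g : ℕ → Fin n → ℝ := fun j =>
    if j ≤ m then (prev (k - m + j)).ofLp else (fp A b (prev k)).ofLp
  have hS : Smat A b prev k m = of fun r (c : Fin (m + 1)) => g (c + 1) r - g c r := by
    ext r c
    have hc := c.isLt
    by_cases hcm : (c : ℕ) < m
    · simp [Smat, g, hcm, hcm.le, add_assoc]
    · simp [Smat, g, show (c : ℕ) = m by omega, Nat.sub_add_cancel hmk]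
  have hcol (i : Fin (m + 1)) : Smat A b prev k m *ᵥ (antiTriangularOnes ℝ (m + 1)).col i =
      (fp A b (prev k) - prev (k - i)).ofLp := by
    have hi := i.isLt
    rw [hS, show (antiTriangularOnes ℝ (m + 1)).col i =
        fun c : Fin (m + 1) => if (i.rev : ℕ) ≤ (c : ℕ) then (1 : ℝ) else 0 by
          ext c; simp [antiTriangularOnes, Fin.le_def],
      of_sub_mulVec_indicator g i.rev.isLt.le]
    simp [g, Fin.val_rev, show k - m + (m - i) = k - i by omega]
  rw [← mulVec_mulVec, mulVec_eq_sum β, mulVec_sum, WithLp.ofLp_sum]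
  refine Finset.sum_congr rfl fun i _ => ?_
  rw [op_smul_eq_smul, mulVec_smul, WithLp.ofLp_smul, ← hcol]
  rfl

theorem NGMRESStep.exists_normal_equation {prev : ℕ → EuclideanSpace ℝ (Fin n)}
    (hmk : m ≤ k) {next : EuclideanSpace ℝ (Fin n)} (h : NGMRESStep A b m prev k next) :
    ∃ γ, next = fp A b (prev k) + WithLp.toLp 2 (Smat A b prev k m *ᵥ γ) ∧
      (A * Smat A b prev k m)ᵀ *ᵥ
        ((res A b (fp A b (prev k))).ofLp + (A * Smat A b prev k m) *ᵥ γ) = 0 := by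
  obtain ⟨β, hmin, rfl⟩ := h
  set S := Smat A b prev k m
  set T := antiTriangularOnes ℝ (m + 1)
  have hsum := Smat_mul_antiTriangularOnes_mulVec (A := A) (b := b) prev hmk
  have hobj (β : Fin (m + 1) → ℝ) : ngObj A b m prev k β =
      ‖WithLp.toLp 2 ((res A b (fp A b (prev k))).ofLp + (A * S * T) *ᵥ β)‖ := by
    rw [ngObj, Matrix.mul_assoc, ← mulVec_mulVec, hsum]
    congr 1
    apply WithLp.ofLp_injective
    simp only [res_sub_res, WithLp.ofLp_add, WithLp.ofLp_sum, WithLp.ofLp_smul, ofLp_mulVecE,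
      mulVec_sum, mulVec_smul]
  refine ⟨T *ᵥ β, ?_, ?_⟩
  · apply WithLp.ofLp_injective
    rw [WithLp.ofLp_add, WithLp.ofLp_add, mulVec_mulVec, hsum]
  · have hnormal := transpose_mulVec_eq_zero_of_forall_norm_le (A * S * T) _ β
      fun γ => by simpa only [hobj] using hmin γ
    rw [transpose_mul, ← mulVec_mulVec, ← mulVec_mulVec β (A * S)] at hnormal
    exact mulVec_injective_of_isUnit ((isUnit_transpose _).mpr (isUnit_antiTriangularOnes _))
      (hnormal.trans (mulVec_zero _).symm)

end NGMRES

theorem stmt_1_general {n m k : ℕ} (A : Matrix (Fin n) (Fin n) ℝ)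
    (b ustar : EuclideanSpace ℝ (Fin n)) (hustar : mulVecE A ustar = b)
    (prev : ℕ → EuclideanSpace ℝ (Fin n)) (hmk : m ≤ k)
    (hrank : (A * Smat A b prev k m).rank = m + 1)
    (next : EuclideanSpace ℝ (Fin n)) (hstep : NGMRESStep A b m prev k next) :
    next - ustar =
      mulVecE ((1 - (Smat A b prev k m * ((Smat A b prev k m)ᵀ * Aᵀ * A * Smat A b prev k m)⁻¹ *
        (Smat A b prev k m)ᵀ * Aᵀ) * A) * (1 - A)) (prev k - ustar) ∧
    res A b next =
      mulVecE ((1 - A * (Smat A b prev k m * ((Smat A b prev k m)ᵀ * Aᵀ * A * Smat A b prev k m)⁻¹ *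
        (Smat A b prev k m)ᵀ * Aᵀ)) * (1 - A)) (res A b (prev k)) := by
  obtain ⟨γ, rfl, hnormal⟩ := hstep.exists_normal_equation hmk
  set S := Smat A b prev k m
  have hG : IsUnit ((A * S)ᵀ * (A * S)) :=
    isUnit_transpose_mul_self_of_rank_eq_card _ (by rw [hrank, Fintype.card_fin])
  set W := S * (Sᵀ * Aᵀ * A * S)⁻¹ * Sᵀ * Aᵀ
  have hSγ : S *ᵥ γ = -(W *ᵥ (res A b (fp A b (prev k))).ofLp) := by
    rw [eq_neg_inv_mulVec_of_transpose_mulVec_eq_zero hG hnormal, mulVec_mulVec, Matrix.mul_neg,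
      neg_mulVec, transpose_mul]
    simp only [W, Matrix.mul_assoc]
  have herr : fp A b (prev k) + WithLp.toLp 2 (S *ᵥ γ) - ustar =
      mulVecE ((1 - W * A) * (1 - A)) (prev k - ustar) := by
    rw [add_sub_right_comm, fp_sub_eq_mulVecE_sub hustar, hSγ, res_eq_mulVecE_sub hustar,
      fp_sub_eq_mulVecE_sub hustar]
    apply WithLp.ofLp_injective
    simp only [WithLp.ofLp_add, ofLp_mulVecE, mulVec_mulVec, ← neg_mulVec, ← add_mulVec]
    congr 1
    noncomm_ring
  refine ⟨herr, ?_⟩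
  rw [res_eq_mulVecE_sub hustar, herr, res_eq_mulVecE_sub hustar, ← mulVecE_mul, ← mulVecE_mul]
  congr 1
  noncomm_ring

/-- error and residual propagation of a single NGMRES(m) step,
`e_{k+1} = (I - W_k A) M e_k` and `r_{k+1} = (I - A W_k) M r_k` with
`W_k = S_k (S_kᵀ Aᵀ A S_k)⁻¹ S_kᵀ Aᵀ`. -/
theorem stmt_1 {n m k : ℕ} (A : Matrix (Fin n) (Fin n) ℝ) (hA : IsUnit A)
    (b ustar : EuclideanSpace ℝ (Fin n)) (hustar : mulVecE A ustar = b)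
    (prev : ℕ → EuclideanSpace ℝ (Fin n)) (hmk : m ≤ k)
    (hrank : (A * Smat A b prev k m).rank = m + 1)
    (next : EuclideanSpace ℝ (Fin n)) (hstep : NGMRESStep A b m prev k next) :
    next - ustar =
      mulVecE ((1 - (Smat A b prev k m * ((Smat A b prev k m)ᵀ * Aᵀ * A * Smat A b prev k m)⁻¹ *
        (Smat A b prev k m)ᵀ * Aᵀ) * A) * (1 - A)) (prev k - ustar) ∧
    res A b next =
      mulVecE ((1 - A * (Smat A b prev k m * ((Smat A b prev k m)ᵀ * Aᵀ * A * Smat A b prev k m)⁻¹ *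
        (Smat A b prev k m)ᵀ * Aᵀ)) * (1 - A)) (res A b (prev k)) :=
  stmt_1_general A b ustar hustar prev hmk hrank next hstep

end
end

section
/- Assume M = U Λ U⁻¹ is diagonalizable with U ∈ ℝ^{n×n} invertible and Λ real diagonal. Starting from u₀, let u_j = q(u_{j−1}) for j = 1, …, m, and let u_{m+1} be produced by a single NGMRES(m) step from u₀, …, u_m (the case m = k of one-step NGMRES). Then ‖r_{m+1}‖ ≤ χ(m+1) · κ₂(U) · ‖r₀‖. -/
open Matrix Polynomial Set

noncomputable section

/-! Richardson steps multiply residuals by `M`, so `r_j = M^j r₀` for `j ≤ m` and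
`r(q(u_m)) = M^{m+1} r₀`. For any polynomial `p` of degree at most `m + 1` with `p(1) = 1`,
the choice `β_i = -p_{m-i}` makes the NGMRES objective equal to `‖p(M) r₀‖`, because the
coefficients of `p` sum to one. Writing `p(M) = U p(Λ) U⁻¹` bounds this by
`κ₂(U) · max_{λ ∈ Σ(M)} |p(λ)| · ‖r₀‖`; minimality of `β` and an infimum over `p` conclude. -/

open scoped Matrix.Norms.L2Operator

lemma sum_fin_sub_eq_sum_range {M : Type*} [AddCommMonoid M] (m : ℕ) (f : ℕ → M) :
    ∑ i : Fin (m + 1), f (m - i) = ∑ j ∈ Finset.range (m + 1), f j := by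
  rw [Fin.sum_univ_eq_sum_range (fun i => f (m - i))]
  conv_rhs => rw [← Finset.sum_range_reflect]
  simp

lemma add_sum_fin_neg_smul_sub_eq_sum_range {V : Type*} [AddCommGroup V] [Module ℝ V]
    (m : ℕ) (c : ℕ → ℝ) (hc : ∑ j ∈ Finset.range (m + 2), c j = 1) (w : ℕ → V) :
    w (m + 1) + ∑ i : Fin (m + 1), (-c (m - i)) • (w (m + 1) - w (m - i))
      = ∑ j ∈ Finset.range (m + 2), c j • w j := by
  simp only [smul_sub, Finset.sum_sub_distrib, neg_smul, Finset.sum_neg_distrib,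
    ← Finset.sum_smul, sum_fin_sub_eq_sum_range m c,
    sum_fin_sub_eq_sum_range m (fun j => c j • w j)]
  rw [Finset.sum_range_succ _ (m + 1)] at hc ⊢
  rw [show c (m + 1) = 1 - ∑ j ∈ Finset.range (m + 1), c j by linarith]
  module

lemma aeval_units_conj {R A : Type*} [CommSemiring R] [Ring A] [Algebra R A] (u : Aˣ) (a : A)
    (p : R[X]) : aeval ((u : A) * a * ↑u⁻¹) p = u * aeval a p * ↑u⁻¹ := by
  simpa [ConjAct.units_smul_def] using
    aeval_algHom_apply (MulSemiringAction.toAlgHom R A (ConjAct.toConjAct u)) a p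

lemma Matrix.aeval_diagonal {ι R : Type*} [Fintype ι] [DecidableEq ι] [CommSemiring R]
    (d : ι → R) (p : R[X]) : aeval (diagonal d) p = diagonal fun i => p.eval (d i) := by
  rw [← diagonalAlgHom_apply R, aeval_algHom_apply, diagonalAlgHom_apply]
  congr 1
  ext i
  simp

section NGMRES

variable {n : ℕ}

lemma mulVecE_eq_toEuclideanCLM (M : Matrix (Fin n) (Fin n) ℝ) (v : EuclideanSpace ℝ (Fin n)) :
    mulVecE M v = toEuclideanCLM (𝕜 := ℝ) M v :=
  rfl

lemma opNorm_eq_norm (M : Matrix (Fin n) (Fin n) ℝ) : opNorm M = ‖M‖ :=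
  rfl

lemma norm_mulVecE_le (M : Matrix (Fin n) (Fin n) ℝ) (v : EuclideanSpace ℝ (Fin n)) :
    ‖mulVecE M v‖ ≤ ‖M‖ * ‖v‖ :=
  (toEuclideanCLM (𝕜 := ℝ) M).le_opNorm v

lemma res_fp (A : Matrix (Fin n) (Fin n) ℝ) (b v : EuclideanSpace ℝ (Fin n)) :
    res A b (fp A b v) = mulVecE (1 - A) (res A b v) := by
  simp only [res, fp, mulVecE_eq_toEuclideanCLM, map_sub, map_one, map_add,
    _root_.sub_apply, one_apply_eq_self]
  abel

lemma res_eq_mulVecE_pow_of_iterate {A : Matrix (Fin n) (Fin n) ℝ}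
    {b : EuclideanSpace ℝ (Fin n)} {u : ℕ → EuclideanSpace ℝ (Fin n)} {m : ℕ}
    (hfp : ∀ j, 1 ≤ j → j ≤ m → u j = fp A b (u (j-1)))
    {j : ℕ} (hj : j ≤ m) : res A b (u j) = mulVecE ((1 - A) ^ j) (res A b (u 0)) := by
  induction j with
  | zero => simp [mulVecE_eq_toEuclideanCLM]
  | succ j ih =>
    rw [hfp (j + 1) j.succ_pos hj, Nat.add_sub_cancel, res_fp, ih (by omega), pow_succ']
    simp only [mulVecE_eq_toEuclideanCLM, map_mul, mul_apply_eq_comp]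

lemma NGMRESStep.norm_res_le {A : Matrix (Fin n) (Fin n) ℝ} {b : EuclideanSpace ℝ (Fin n)}
    {m k : ℕ} {prev : ℕ → EuclideanSpace ℝ (Fin n)} {next : EuclideanSpace ℝ (Fin n)}
    (h : NGMRESStep A b m prev k next) (γ : Fin (m+1) → ℝ) :
    ‖res A b next‖ ≤ ngObj A b m prev k γ := by
  obtain ⟨β, hmin, rfl⟩ := h
  refine le_of_eq_of_le ?_ (hmin γ)
  simp only [ngObj, res, mulVecE_eq_toEuclideanCLM, map_add, map_sum, map_smul, map_sub,
    sub_sub_sub_cancel_right]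
  abel_nf

lemma ngObj_neg_coeff_eq_norm_mulVecE_aeval {m : ℕ} {A : Matrix (Fin n) (Fin n) ℝ}
    {b : EuclideanSpace ℝ (Fin n)} {u : ℕ → EuclideanSpace ℝ (Fin n)}
    (hfp : ∀ j, 1 ≤ j → j ≤ m → u j = fp A b (u (j-1)))
    {p : ℝ[X]} (hdeg : p.natDegree ≤ m + 1) (hp : p.eval 1 = 1) :
    ngObj A b m u m (fun i => -p.coeff (m - i))
      = ‖mulVecE (aeval (1 - A) p) (res A b (u 0))‖ := by
  set w : ℕ → EuclideanSpace ℝ (Fin n) := fun j => mulVecE ((1 - A) ^ j) (res A b (u 0))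
  have hdeg' : p.natDegree < m + 2 := by omega
  have hres_fp : res A b (fp A b (u m)) = w (m + 1) := by
    rw [res_fp, res_eq_mulVecE_pow_of_iterate hfp le_rfl]
    simp only [w, pow_succ', mulVecE_eq_toEuclideanCLM, map_mul, mul_apply_eq_comp]
  have hres : ∀ i : Fin (m + 1), res A b (u (m - i)) = w (m - i) :=
    fun i => res_eq_mulVecE_pow_of_iterate hfp (Nat.sub_le _ _)
  have hsum : ∑ j ∈ Finset.range (m + 2), p.coeff j = 1 := by
    simpa only [one_pow, mul_one, hp] using (eval_eq_sum_range' hdeg' (1 : ℝ)).symm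
  rw [ngObj, hres_fp, Fintype.sum_congr _ _ fun i => by rw [hres i],
    add_sum_fin_neg_smul_sub_eq_sum_range m _ hsum, aeval_eq_sum_range' hdeg']
  simp only [w, mulVecE_eq_toEuclideanCLM, map_sum, map_smul, FunLike.coe_sum,
    Finset.sum_apply, FunLike.coe_smul, Pi.smul_apply]

lemma norm_mulVecE_aeval_conj_diagonal_le {U : Matrix (Fin n) (Fin n) ℝ} (hU : IsUnit U)
    (d : Fin n → ℝ) (p : ℝ[X]) (v : EuclideanSpace ℝ (Fin n)) :
    ‖mulVecE (aeval (U * diagonal d * U⁻¹) p) v‖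
      ≤ sSup ((fun x => |p.eval x|) '' spectrum ℝ (U * diagonal d * U⁻¹)) *
        (condNum U * ‖v‖) := by
  have hconj : U * diagonal d * U⁻¹ = (hU.unit : Matrix (Fin n) (Fin n) ℝ) * diagonal d *
      (↑hU.unit⁻¹ : Matrix (Fin n) (Fin n) ℝ) := by
    rw [coe_units_inv, hU.unit_spec]
  rw [hconj, spectrum.units_conjugate, spectrum_diagonal, aeval_units_conj, aeval_diagonal,
    coe_units_inv, hU.unit_spec]
  set C := sSup ((fun x => |p.eval x|) '' range d)
  have hbound : ∀ i, |p.eval (d i)| ≤ C := fun i =>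
    le_csSup ((finite_range d).image _).bddAbove (mem_image_of_mem _ (mem_range_self i))
  have hC : 0 ≤ C := Real.sSup_nonneg (by rintro _ ⟨x, -, rfl⟩; exact abs_nonneg _)
  have hdiag : ‖(diagonal fun i => p.eval (d i) : Matrix (Fin n) (Fin n) ℝ)‖ ≤ C := by
    rw [l2_opNorm_diagonal]
    exact (pi_norm_le_iff_of_nonneg hC).mpr hbound
  calc _ ≤ ‖U * diagonal (fun i => p.eval (d i)) * U⁻¹‖ * ‖v‖ := norm_mulVecE_le _ _
    _ ≤ ‖U‖ * C * ‖U⁻¹‖ * ‖v‖ := by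
        gcongr
        exact (norm_mul_le _ _).trans (by gcongr; exact (norm_mul_le _ _).trans (by gcongr))
    _ = C * (condNum U * ‖v‖) := by
        rw [condNum, opNorm_eq_norm, opNorm_eq_norm]
        ring

lemma le_chiSp_mul {s : ℕ} {M : Matrix (Fin n) (Fin n) ℝ} {x K : ℝ} (hK : 0 ≤ K)
    (h : ∀ p : ℝ[X], p.natDegree ≤ s → p.eval 1 = 1 →
      x ≤ sSup ((fun x => |p.eval x|) '' spectrum ℝ M) * K) :
    x ≤ chiSp M s * K := by
  rw [chiSp, mul_comm, ← smul_eq_mul, ← Real.sInf_smul_of_nonneg hK]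
  refine le_csInf (Set.Nonempty.smul_set ⟨_, 1, by simp, by simp, rfl⟩) ?_
  rintro _ ⟨_, ⟨p, hdeg, hp, rfl⟩, rfl⟩
  exact (h p hdeg hp).trans_eq (mul_comm _ _)

end NGMRES

theorem stmt_3_general {n m : ℕ} (A U : Matrix (Fin n) (Fin n) ℝ) (d : Fin n → ℝ)
    (hU : IsUnit U)
    (hM : (1 : Matrix (Fin n) (Fin n) ℝ) - A = U * Matrix.diagonal d * U⁻¹)
    (b : EuclideanSpace ℝ (Fin n)) (u : ℕ → EuclideanSpace ℝ (Fin n))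
    (hfp : ∀ j, 1 ≤ j → j ≤ m → u j = fp A b (u (j-1)))
    (next : EuclideanSpace ℝ (Fin n)) (hstep : NGMRESStep A b m u m next) :
    ‖res A b next‖ ≤ chiSp ((1 : Matrix (Fin n) (Fin n) ℝ) - A) (m+1) * condNum U *
      ‖res A b (u 0)‖ := by
  rw [mul_assoc]
  have hK : 0 ≤ condNum U * ‖res A b (u 0)‖ := by
    rw [condNum, opNorm_eq_norm, opNorm_eq_norm]
    positivity
  refine le_chiSp_mul hK fun p hdeg hp => ?_
  calc ‖res A b next‖ ≤ ngObj A b m u m (fun i => -p.coeff (m - i)) := hstep.norm_res_le _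
    _ = ‖mulVecE (aeval (1 - A) p) (res A b (u 0))‖ :=
        ngObj_neg_coeff_eq_norm_mulVecE_aeval hfp hdeg hp
    _ ≤ _ := by
        rw [hM]
        exact norm_mulVecE_aeval_conj_diagonal_le hU d p _

/-- one-step NGMRES(m) with m = k in the diagonalizable case,
`‖r_{m+1}‖ ≤ χ(m+1) · κ₂(U) · ‖r₀‖`. -/
theorem stmt_3 {n m : ℕ} (A U : Matrix (Fin n) (Fin n) ℝ) (d : Fin n → ℝ)
    (hA : IsUnit A) (hU : IsUnit U)
    (hM : (1 : Matrix (Fin n) (Fin n) ℝ) - A = U * Matrix.diagonal d * U⁻¹)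
    (b : EuclideanSpace ℝ (Fin n)) (u : ℕ → EuclideanSpace ℝ (Fin n))
    (hfp : ∀ j, 1 ≤ j → j ≤ m → u j = fp A b (u (j-1)))
    (next : EuclideanSpace ℝ (Fin n)) (hstep : NGMRESStep A b m u m next) :
    ‖res A b next‖ ≤ chiSp ((1 : Matrix (Fin n) (Fin n) ℝ) - A) (m+1) * condNum U *
      ‖res A b (u 0)‖ :=
  stmt_3_general A U d hU hM b u hfp next hstep

end
end

section
/- Let (u_k) be the aNGMRES(∞, p) iterates from u₀ and (u_k^G) the full GMRES iterates from the same u₀, and set ν = ν(A, r₀). Assume GMRES does not stagnate, i.e., u_ℓ^G ≠ u_{ℓ+1}^G for all ℓ < ν. Then, with s the integer satisfying (s−1)p < ν ≤ sp, one has u_{sp} = u_ν^G = u*. -/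
open Matrix Polynomial Set

noncomputable section

/-!
Write `K_k` for the Krylov space and `V_k = span {u_{j+1} - u_j | j < k}`. By induction on `k`,
`V_k = K_k`, and `r_k ∉ K_k` for `k < ν`. The NGMRES step producing `u_{k+1}` minimizes the
residual over `u₀ + V_k + span {r_k} = u₀ + K_{k+1}`, so it is exactly the GMRES step and
`u_{k+1} = u^G_{k+1}`; non-stagnation then forces `u_{k+1} - u_k ∉ K_k`, while a Richardson step
adds `u_{k+1} - u_k = -r_k ∉ K_k`. Either way `V_{k+1} = K_{k+1}` (past the grade, `K_k = K_ν`).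
Hence `u_{sp} = u^G_{sp} = u^G_ν`, and `u^G_ν = u*` because `A` maps the `A`-invariant space
`K_ν` onto itself, so that `u* - u₀ ∈ K_ν`.
-/

theorem Submodule.span_range_fin_succ {R M : Type*} [Semiring R] [AddCommMonoid M] [Module R M]
    (f : ℕ → M) (k : ℕ) :
    span R (range fun i : Fin (k + 1) => f i) =
      span R (range fun i : Fin k => f i) ⊔ span R {f k} := by
  rw [sup_comm, ← Submodule.span_insert]
  congr 1
  ext x
  simp [Fin.exists_fin_succ', or_comm, eq_comm]

variable {n : ℕ} {A : Matrix (Fin n) (Fin n) ℝ} {b r u₀ x y : EuclideanSpace ℝ (Fin n)}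

theorem mulVecE_eq_toLpLin (A : Matrix (Fin n) (Fin n) ℝ) : mulVecE A = Matrix.toLpLin 2 2 A := rfl

theorem mulVecE_injective (hA : IsUnit A) : Function.Injective (mulVecE A) :=
  fun _ _ h => WithLp.ofLp_injective 2 (Matrix.mulVec_injective_iff_isUnit.mpr hA
    (congrArg WithLp.ofLp h))

theorem res_add (A : Matrix (Fin n) (Fin n) ℝ) (b x y : EuclideanSpace ℝ (Fin n)) :
    res A b (x + y) = res A b x + mulVecE A y := by
  simp only [res, mulVecE_eq_toLpLin, map_add]
  abel

theorem res_eq_res_add (A : Matrix (Fin n) (Fin n) ℝ) (b u₀ x : EuclideanSpace ℝ (Fin n)) :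
    res A b x = res A b u₀ + mulVecE A (x - u₀) := by
  rw [← res_add, add_sub_cancel]

theorem fp_sub_self (A : Matrix (Fin n) (Fin n) ℝ) (b x : EuclideanSpace ℝ (Fin n)) :
    fp A b x - x = -res A b x := by
  simp only [fp, res, mulVecE_eq_toLpLin, map_sub, Matrix.toLpLin_one, LinearMap.sub_apply,
    LinearMap.id_apply]
  abel

theorem res_midpoint (A : Matrix (Fin n) (Fin n) ℝ) (b x y : EuclideanSpace ℝ (Fin n)) :
    res A b ((1 / 2 : ℝ) • (x + y)) = (1 / 2 : ℝ) • (res A b x + res A b y) := by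
  simp only [res, mulVecE_eq_toLpLin, map_smul, map_add]
  module

open Submodule

def IsMinRes (A : Matrix (Fin n) (Fin n) ℝ) (b u₀ : EuclideanSpace ℝ (Fin n))
    (W : Submodule ℝ (EuclideanSpace ℝ (Fin n))) (x : EuclideanSpace ℝ (Fin n)) : Prop :=
  x - u₀ ∈ W ∧ ∀ w ∈ W, ‖res A b x‖ ≤ ‖res A b (u₀ + w)‖

namespace IsMinRes

variable {W W' : Submodule ℝ (EuclideanSpace ℝ (Fin n))}

theorem unique (hA : IsUnit A) (hx : IsMinRes A b u₀ W x) (hy : IsMinRes A b u₀ W y) :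
    x = y := by
  have hnorm : ‖res A b x‖ = ‖res A b y‖ :=
    le_antisymm (by simpa using hx.2 _ hy.1) (by simpa using hy.2 _ hx.1)
  have hmid : ‖res A b x‖ ≤ ‖(1 / 2 : ℝ) • (res A b x + res A b y)‖ := by
    have h := hx.2 _ (W.smul_mem (1 / 2 : ℝ) (W.add_mem hx.1 hy.1))
    rwa [show u₀ + (1 / 2 : ℝ) • (x - u₀ + (y - u₀)) = (1 / 2 : ℝ) • (x + y) by module,
      res_midpoint] at h
  have hres : res A b x = res A b y :=
    not_not.mp fun hne => hmid.not_gt ((norm_midpoint_lt_iff hnorm).mpr hne)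
  exact mulVecE_injective hA (sub_left_injective hres)

theorem of_le (h : IsMinRes A b u₀ W' x) (hW : W ≤ W') (hx : x - u₀ ∈ W) :
    IsMinRes A b u₀ W x :=
  ⟨hx, fun w hw => h.2 w (hW hw)⟩

theorem rebase {u₁ : EuclideanSpace ℝ (Fin n)} (h : IsMinRes A b u₁ W x) (hu : u₁ - u₀ ∈ W) :
    IsMinRes A b u₀ W x := by
  refine ⟨by simpa using W.add_mem h.1 hu, fun w hw => ?_⟩
  convert h.2 (w - (u₁ - u₀)) (W.sub_mem hw hu) using 3
  abel

end IsMinRes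

theorem isMinRes_of_res_eq_zero {W : Submodule ℝ (EuclideanSpace ℝ (Fin n))} (hx : x - u₀ ∈ W)
    (h0 : res A b x = 0) : IsMinRes A b u₀ W x :=
  ⟨hx, fun _ _ => by simp [h0]⟩

theorem NGMRESStep.isMinRes {m k : ℕ} {prev : ℕ → EuclideanSpace ℝ (Fin n)}
    {next : EuclideanSpace ℝ (Fin n)} (h : NGMRESStep A b m prev k next) :
    IsMinRes A b (fp A b (prev k))
      (span ℝ (range fun i : Fin (m + 1) => fp A b (prev k) - prev (k - i))) next := by
  obtain ⟨β, hβ, rfl⟩ := h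
  have hres : ∀ γ : Fin (m + 1) → ℝ,
      res A b (fp A b (prev k) + ∑ i, γ i • (fp A b (prev k) - prev (k - i))) =
        res A b (fp A b (prev k)) +
          ∑ i, γ i • (res A b (fp A b (prev k)) - res A b (prev (k - i))) := by
    intro γ
    simp only [res, mulVecE_eq_toLpLin, map_add, map_sum, map_smul, map_sub,
      sub_sub_sub_cancel_right]
    abel
  refine ⟨?_, fun w hw => ?_⟩
  · rw [add_sub_cancel_left]
    exact sum_mem fun i _ => smul_mem _ _ (subset_span ⟨i, rfl⟩)
  · obtain ⟨γ, rfl⟩ := (mem_span_range_iff_exists_fun ℝ).mp hw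
    rw [hres, hres]
    exact hβ γ

def diffSpan (u : ℕ → EuclideanSpace ℝ (Fin n)) (k : ℕ) :
    Submodule ℝ (EuclideanSpace ℝ (Fin n)) :=
  span ℝ (range fun j : Fin k => u (j + 1) - u j)

section diffSpan

variable {u : ℕ → EuclideanSpace ℝ (Fin n)} {k : ℕ}

theorem diffSpan_zero : diffSpan u 0 = ⊥ := by
  simp [diffSpan]

theorem diffSpan_succ : diffSpan u (k + 1) = diffSpan u k ⊔ span ℝ {u (k + 1) - u k} :=
  span_range_fin_succ (fun j => u (j + 1) - u j) k

theorem diffSpan_mono : Monotone (diffSpan u) :=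
  monotone_nat_of_le_succ fun _ => diffSpan_succ ▸ le_sup_left

theorem sub_mem_diffSpan (k : ℕ) : u k - u 0 ∈ diffSpan u k := by
  induction k with
  | zero => simp
  | succ k ih =>
    rw [diffSpan_succ, ← sub_add_sub_cancel (u (k + 1)) (u k) (u 0)]
    exact add_mem (mem_sup_right (mem_span_singleton_self _)) (mem_sup_left ih)

theorem span_fp_sub_eq_diffSpan_sup (A : Matrix (Fin n) (Fin n) ℝ) (b : EuclideanSpace ℝ (Fin n))
    (u : ℕ → EuclideanSpace ℝ (Fin n)) (k : ℕ) :
    span ℝ (range fun i : Fin (k + 1) => fp A b (u k) - u (k - i)) =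
      diffSpan u k ⊔ span ℝ {res A b (u k)} := by
  set S := span ℝ (range fun i : Fin (k + 1) => fp A b (u k) - u (k - i))
  have hgen : ∀ j ≤ k, fp A b (u k) - u j ∈ S := fun j hj =>
    subset_span ⟨⟨k - j, by omega⟩, by simp [Nat.sub_sub_self hj]⟩
  refine le_antisymm (span_le.mpr ?_) (sup_le (span_le.mpr ?_) ?_)
  · rintro _ ⟨i, rfl⟩
    dsimp only
    rw [show fp A b (u k) - u (k - i) = (fp A b (u k) - u k) + (u k - u 0) - (u (k - i) - u 0) by
      abel, fp_sub_self]
    exact sub_mem (add_mem (mem_sup_right (neg_mem (mem_span_singleton_self _)))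
      (mem_sup_left (sub_mem_diffSpan k)))
      (mem_sup_left (diffSpan_mono (Nat.sub_le k i) (sub_mem_diffSpan _)))
  · rintro _ ⟨j, rfl⟩
    dsimp only
    rw [← sub_sub_sub_cancel_left _ _ (fp A b (u k))]
    exact sub_mem (hgen j (by omega)) (hgen (j + 1) (by omega))
  · rw [span_singleton_le_iff_mem, ← neg_neg (res A b (u k)), ← fp_sub_self]
    exact neg_mem (hgen k le_rfl)

theorem NGMRESStep.isMinRes_diffSpan_sup {next : EuclideanSpace ℝ (Fin n)}
    (h : NGMRESStep A b k u k next) :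
    IsMinRes A b (u 0) (diffSpan u k ⊔ span ℝ {res A b (u k)}) next := by
  rw [← span_fp_sub_eq_diffSpan_sup]
  exact h.isMinRes.rebase (subset_span ⟨Fin.last k, by simp⟩)

end diffSpan

namespace aNGMRES

variable {m : ℕ∞} {p k : ℕ} {u : ℕ → EuclideanSpace ℝ (Fin n)}

theorem eq_fp (hu : aNGMRES A b m p u) (hk : ¬ p ∣ k + 1) : u (k + 1) = fp A b (u k) :=
  (hu (k + 1) le_add_self).1 hk

theorem ngmresStep_top (hu : aNGMRES A b ⊤ p u) (hk : p ∣ k + 1) :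
    NGMRESStep A b k u k (u (k + 1)) := by
  have hm : min (⊤ : ℕ∞) ((k + 1 : ℕ) - 1) = k := by
    rw [min_eq_right le_top]
    norm_cast
  simpa only [hm, ENat.toNat_natCast, Nat.add_sub_cancel] using (hu (k + 1) le_add_self).2 hk

end aNGMRES

section Krylov

variable {k ν : ℕ}

theorem Krylov_zero (A : Matrix (Fin n) (Fin n) ℝ) (r : EuclideanSpace ℝ (Fin n)) :
    Krylov A r 0 = ⊥ := by
  simp [Krylov]

theorem Krylov_succ (A : Matrix (Fin n) (Fin n) ℝ) (r : EuclideanSpace ℝ (Fin n)) (k : ℕ) :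
    Krylov A r (k + 1) = Krylov A r k ⊔ span ℝ {mulVecE (A ^ k) r} :=
  span_range_fin_succ (fun i => mulVecE (A ^ i) r) k

theorem Krylov_succ_eq_span_sup_map (A : Matrix (Fin n) (Fin n) ℝ)
    (r : EuclideanSpace ℝ (Fin n)) (k : ℕ) :
    Krylov A r (k + 1) = span ℝ {r} ⊔ (Krylov A r k).map (Matrix.toLpLin 2 2 A) := by
  rw [Krylov, Krylov, map_span, ← span_insert]
  congr 1
  ext x
  simp [Fin.exists_fin_succ, mulVecE_eq_toLpLin, Matrix.toLpLin_pow, pow_succ', eq_comm]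

theorem Krylov_mono (A : Matrix (Fin n) (Fin n) ℝ) (r : EuclideanSpace ℝ (Fin n)) :
    Monotone (Krylov A r) :=
  monotone_nat_of_le_succ fun k => (Krylov_succ A r k).symm ▸ le_sup_left

theorem mulVecE_pow_mem_Krylov {i : ℕ} (hi : i < k) : mulVecE (A ^ i) r ∈ Krylov A r k :=
  subset_span ⟨⟨i, hi⟩, rfl⟩

theorem self_mem_Krylov (hk : 0 < k) : r ∈ Krylov A r k := by
  obtain ⟨k, rfl⟩ := Nat.exists_eq_add_of_lt hk
  rw [zero_add, Krylov_succ_eq_span_sup_map]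
  exact mem_sup_left (mem_span_singleton_self r)

theorem mulVecE_mem_Krylov_succ (hx : x ∈ Krylov A r k) : mulVecE A x ∈ Krylov A r (k + 1) := by
  rw [Krylov_succ_eq_span_sup_map]
  exact mem_sup_right (mem_map_of_mem hx)

theorem res_mem_Krylov_succ (hx : x - u₀ ∈ Krylov A (res A b u₀) k) :
    res A b x ∈ Krylov A (res A b u₀) (k + 1) := by
  rw [res_eq_res_add A b u₀ x]
  exact add_mem (self_mem_Krylov k.succ_pos) (mulVecE_mem_Krylov_succ hx)

theorem finrank_Krylov_le (A : Matrix (Fin n) (Fin n) ℝ) (r : EuclideanSpace ℝ (Fin n)) (k : ℕ) :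
    Module.finrank ℝ (Krylov A r k) ≤ k := by
  have h := finrank_range_le_card (R := ℝ) fun i : Fin k => mulVecE (A ^ (i : ℕ)) r
  rwa [Fintype.card_fin] at h

theorem Krylov_eq_of_succ_eq {j : ℕ} (h : Krylov A r (j + 1) = Krylov A r j) (hjk : j ≤ k) :
    Krylov A r k = Krylov A r j := by
  induction k, hjk using Nat.le_induction with
  | base => rfl
  | succ k _ ih => rw [Krylov_succ_eq_span_sup_map, ih, ← Krylov_succ_eq_span_sup_map, h]

theorem sup_span_eq_Krylov_succ (hx : x ∈ Krylov A r (k + 1)) (hx' : x ∉ Krylov A r k) :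
    Krylov A r k ⊔ span ℝ {x} = Krylov A r (k + 1) := by
  have hpow : mulVecE (A ^ k) r ∉ Krylov A r k := fun h => by
    rw [Krylov_succ, sup_eq_left.mpr ((span_singleton_le_iff_mem _ _).mpr h)] at hx
    exact hx' hx
  have hcov := covBy_span_singleton_sup hpow
  rw [sup_comm, ← Krylov_succ] at hcov
  refine (hcov.eq_or_eq le_sup_left
    (sup_le (Krylov_mono A r k.le_succ) ((span_singleton_le_iff_mem _ _).mpr hx))).resolve_left ?_
  exact fun h => hx' (h ▸ mem_sup_right (mem_span_singleton_self x))

theorem mulVecE_pow_notMem_Krylov (hν : Module.finrank ℝ (Krylov A r ν) = ν) (hk : k < ν) :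
    mulVecE (A ^ k) r ∉ Krylov A r k := fun h => by
  have hstab := Krylov_eq_of_succ_eq
    (by rw [Krylov_succ, sup_eq_left.mpr ((span_singleton_le_iff_mem _ _).mpr h)]) hk.le
  have := finrank_Krylov_le A r k
  rw [← hstab, hν] at this
  omega

/-- Otherwise `K_{k+1} = K_k ⊔ span {x}` would be `A`-invariant, so the Krylov spaces would stop
growing before the grade. -/
theorem add_mulVecE_notMem_Krylov (hν : Module.finrank ℝ (Krylov A r ν) = ν) (hk : k + 2 ≤ ν)
    (hy : y ∈ Krylov A r (k + 1)) (hx : x ∈ Krylov A r (k + 1)) (hx' : x ∉ Krylov A r k) :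
    y + mulVecE A x ∉ Krylov A r (k + 1) := fun h => by
  have hAx : mulVecE A x ∈ Krylov A r (k + 1) := by simpa using sub_mem h hy
  have hinv : Krylov A r (k + 1) ≤ (Krylov A r (k + 1)).comap (Matrix.toLpLin 2 2 A) :=
    (sup_span_eq_Krylov_succ hx hx').ge.trans
      (sup_le (fun z hz => mulVecE_mem_Krylov_succ hz) ((span_singleton_le_iff_mem _ _).mpr hAx))
  have hle : Krylov A r (k + 2) ≤ Krylov A r (k + 1) := by
    rw [Krylov_succ_eq_span_sup_map]
    exact sup_le ((span_singleton_le_iff_mem _ _).mpr (self_mem_Krylov k.succ_pos))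
      (map_le_iff_le_comap.mpr hinv)
  exact mulVecE_pow_notMem_Krylov hν (by omega : k + 1 < ν)
    (hle (mulVecE_pow_mem_Krylov (k + 1).lt_succ_self))

theorem Krylov_grade_succ (hν : IsGreatest {ℓ | Module.finrank ℝ (Krylov A r ℓ) = ℓ} ν) :
    Krylov A r (ν + 1) = Krylov A r ν := by
  by_contra h
  have hlt := finrank_lt_finrank_of_lt (lt_of_le_of_ne (Krylov_mono A r ν.le_succ) (Ne.symm h))
  rw [hν.1] at hlt
  have := hν.2 (le_antisymm (finrank_Krylov_le A r (ν + 1)) hlt)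
  omega

theorem Krylov_eq_Krylov_grade (hν : IsGreatest {ℓ | Module.finrank ℝ (Krylov A r ℓ) = ℓ} ν)
    (hk : ν ≤ k) : Krylov A r k = Krylov A r ν :=
  Krylov_eq_of_succ_eq (Krylov_grade_succ hν) hk

theorem sup_span_eq_Krylov_succ_of_grade
    (hν : IsGreatest {ℓ | Module.finrank ℝ (Krylov A r ℓ) = ℓ} ν) (hx : x ∈ Krylov A r (k + 1))
    (hx' : k < ν → x ∉ Krylov A r k) : Krylov A r k ⊔ span ℝ {x} = Krylov A r (k + 1) := by
  by_cases hk : k < ν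
  · exact sup_span_eq_Krylov_succ hx (hx' hk)
  · have hstab : Krylov A r (k + 1) = Krylov A r k :=
      (Krylov_eq_Krylov_grade hν (by omega)).trans (Krylov_eq_Krylov_grade hν (by omega)).symm
    rw [hstab] at hx ⊢
    exact sup_eq_left.mpr ((span_singleton_le_iff_mem _ _).mpr hx)

theorem sub_mem_Krylov_grade (hA : IsUnit A)
    (hν : IsGreatest {ℓ | Module.finrank ℝ (Krylov A (res A b u₀) ℓ) = ℓ} ν)
    (hx : mulVecE A x = b) : x - u₀ ∈ Krylov A (res A b u₀) ν := by
  set K := Krylov A (res A b u₀) ν with hK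
  have hinv : ∀ z ∈ K, Matrix.toLpLin 2 2 A z ∈ K := fun z hz => by
    rw [hK, ← Krylov_grade_succ hν]
    exact mulVecE_mem_Krylov_succ hz
  have hres : -res A b u₀ ∈ K := by
    rw [hK, ← Krylov_grade_succ hν]
    exact neg_mem (self_mem_Krylov ν.succ_pos)
  have hinj : Function.Injective ((Matrix.toLpLin 2 2 A).restrict hinv) := fun z w h =>
    Subtype.ext (mulVecE_injective hA (congrArg Subtype.val h))
  obtain ⟨w, hw⟩ := LinearMap.injective_iff_surjective.mp hinj ⟨_, hres⟩
  have hAw : mulVecE A w = mulVecE A (x - u₀) := by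
    rw [show mulVecE A w = -res A b u₀ from congrArg Subtype.val hw, res, mulVecE_eq_toLpLin,
      map_sub, ← mulVecE_eq_toLpLin, hx, neg_sub]
  exact mulVecE_injective hA hAw ▸ w.2

end Krylov

namespace aNGMRES

variable {p ν : ℕ} {u uG : ℕ → EuclideanSpace ℝ (Fin n)}

theorem isMinRes_top (hu : aNGMRES A b ⊤ p u)
    (hν : IsGreatest {ℓ | Module.finrank ℝ (Krylov A (res A b (u 0)) ℓ) = ℓ} ν) {k : ℕ}
    (hV : diffSpan u k = Krylov A (res A b (u 0)) k)
    (hres : k < ν → res A b (u k) ∉ Krylov A (res A b (u 0)) k) (hk : p ∣ k + 1) :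
    IsMinRes A b (u 0) (Krylov A (res A b (u 0)) (k + 1)) (u (k + 1)) := by
  rw [← sup_span_eq_Krylov_succ_of_grade hν (res_mem_Krylov_succ (hV ▸ sub_mem_diffSpan k)) hres,
    ← hV]
  exact (hu.ngmresStep_top hk).isMinRes_diffSpan_sup

theorem sub_mem_Krylov_top (hA : IsUnit A) (hu : aNGMRES A b ⊤ p u)
    (hG : ∀ k, IsMinRes A b (u 0) (Krylov A (res A b (u 0)) k) (uG k))
    (hν : IsGreatest {ℓ | Module.finrank ℝ (Krylov A (res A b (u 0)) ℓ) = ℓ} ν)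
    (hstag : ∀ ℓ < ν, uG ℓ ≠ uG (ℓ + 1)) {k : ℕ}
    (hV : diffSpan u k = Krylov A (res A b (u 0)) k)
    (hres : k < ν → res A b (u k) ∉ Krylov A (res A b (u 0)) k) :
    u (k + 1) - u k ∈ Krylov A (res A b (u 0)) (k + 1) ∧
      (k < ν → u (k + 1) - u k ∉ Krylov A (res A b (u 0)) k) := by
  have huk : u k - u 0 ∈ Krylov A (res A b (u 0)) k := hV ▸ sub_mem_diffSpan k
  by_cases hk : p ∣ k + 1
  · have hmin := hu.isMinRes_top hν hV hres hk
    refine ⟨by simpa using sub_mem hmin.1 (Krylov_mono _ _ k.le_succ huk), fun hkν hmem => ?_⟩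
    have hmem' : u (k + 1) - u 0 ∈ Krylov A (res A b (u 0)) k := by
      simpa using add_mem hmem huk
    exact hstag k hkν (((hG k).unique hA (hmin.of_le (Krylov_mono _ _ k.le_succ) hmem')).trans
      ((hG (k + 1)).unique hA hmin).symm)
  · rw [hu.eq_fp hk, fp_sub_self]
    exact ⟨neg_mem (res_mem_Krylov_succ huk), fun hkν => neg_mem_iff.not.mpr (hres hkν)⟩

theorem diffSpan_eq_Krylov_top (hA : IsUnit A) (hu : aNGMRES A b ⊤ p u)
    (hG : ∀ k, IsMinRes A b (u 0) (Krylov A (res A b (u 0)) k) (uG k))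
    (hν : IsGreatest {ℓ | Module.finrank ℝ (Krylov A (res A b (u 0)) ℓ) = ℓ} ν)
    (hstag : ∀ ℓ < ν, uG ℓ ≠ uG (ℓ + 1)) (k : ℕ) :
    diffSpan u k = Krylov A (res A b (u 0)) k ∧
      (k < ν → res A b (u k) ∉ Krylov A (res A b (u 0)) k) := by
  induction k with
  | zero =>
    refine ⟨by rw [diffSpan_zero, Krylov_zero], fun hν0 => ?_⟩
    simpa only [pow_zero, mulVecE_eq_toLpLin, Matrix.toLpLin_one, LinearMap.id_apply] using
      mulVecE_pow_notMem_Krylov hν.1 hν0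
  | succ k ih =>
    obtain ⟨hV, hres⟩ := ih
    obtain ⟨hstep, hstep'⟩ := hu.sub_mem_Krylov_top hA hG hν hstag hV hres
    refine ⟨by rw [diffSpan_succ, hV, sup_span_eq_Krylov_succ_of_grade hν hstep hstep'],
      fun hk => ?_⟩
    have huk : u k - u 0 ∈ Krylov A (res A b (u 0)) k := hV ▸ sub_mem_diffSpan k
    rw [res_eq_res_add A b (u k) (u (k + 1))]
    exact add_mulVecE_notMem_Krylov hν.1 (by omega) (res_mem_Krylov_succ huk) hstep
      (hstep' (by omega))

theorem eq_gmres_top (hA : IsUnit A) (hu : aNGMRES A b ⊤ p u)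
    (hG : ∀ k, IsMinRes A b (u 0) (Krylov A (res A b (u 0)) k) (uG k))
    (hν : IsGreatest {ℓ | Module.finrank ℝ (Krylov A (res A b (u 0)) ℓ) = ℓ} ν)
    (hstag : ∀ ℓ < ν, uG ℓ ≠ uG (ℓ + 1)) {k : ℕ} (hk : p ∣ k) : u k = uG k := by
  cases k with
  | zero =>
    have h0 := (hG 0).1
    rw [Krylov_zero, mem_bot, sub_eq_zero] at h0
    exact h0.symm
  | succ k =>
    obtain ⟨hV, hres⟩ := hu.diffSpan_eq_Krylov_top hA hG hν hstag k
    exact (hu.isMinRes_top hν hV hres hk).unique hA (hG (k + 1))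

end aNGMRES

theorem stmt_12_general {n p : ℕ} (A : Matrix (Fin n) (Fin n) ℝ) (hA : IsUnit A)
    (b ustar : EuclideanSpace ℝ (Fin n)) (hustar : mulVecE A ustar = b)
    (u uG : ℕ → EuclideanSpace ℝ (Fin n))
    (hu : aNGMRES A b ⊤ p u)
    (hG : ∀ k : ℕ, (uG k - u 0) ∈ Krylov A (res A b (u 0)) k ∧
      ∀ w ∈ Krylov A (res A b (u 0)) k, ‖res A b (uG k)‖ ≤ ‖res A b (u 0 + w)‖)
    (ν : ℕ)
    (hν : IsGreatest {ℓ : ℕ | Module.finrank ℝ (Krylov A (res A b (u 0)) ℓ) = ℓ} ν)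
    (hstag : ∀ ℓ < ν, uG ℓ ≠ uG (ℓ+1))
    (s : ℕ) (hs2 : ν ≤ s * p) :
    u (s * p) = uG ν ∧ uG ν = ustar := by
  refine ⟨?_, IsMinRes.unique hA (hG ν) (isMinRes_of_res_eq_zero (sub_mem_Krylov_grade hA hν hustar)
    (by rw [res, hustar, sub_self]))⟩
  rw [hu.eq_gmres_top hA hG hν hstag (dvd_mul_left p s)]
  exact IsMinRes.unique hA (hG (s * p)) (Krylov_eq_Krylov_grade hν hs2 ▸ hG ν)

/-- if GMRES does not stagnate then aNGMRES(∞, p) reaches the exact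
solution at iteration sp, where (s-1)p < ν ≤ sp. -/
theorem stmt_12 {n p : ℕ} (hp : 1 ≤ p) (A : Matrix (Fin n) (Fin n) ℝ) (hA : IsUnit A)
    (b ustar : EuclideanSpace ℝ (Fin n)) (hustar : mulVecE A ustar = b)
    (u uG : ℕ → EuclideanSpace ℝ (Fin n))
    (hu : aNGMRES A b ⊤ p u) (hG0 : uG 0 = u 0)
    (hG : ∀ k : ℕ, (uG k - u 0) ∈ Krylov A (res A b (u 0)) k ∧
      ∀ w ∈ Krylov A (res A b (u 0)) k, ‖res A b (uG k)‖ ≤ ‖res A b (u 0 + w)‖)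
    (ν : ℕ)
    (hν : IsGreatest {ℓ : ℕ | Module.finrank ℝ (Krylov A (res A b (u 0)) ℓ) = ℓ} ν)
    (hstag : ∀ ℓ < ν, uG ℓ ≠ uG (ℓ+1))
    (s : ℕ) (hs1 : (s-1) * p < ν) (hs2 : ν ≤ s * p) :
    u (s * p) = uG ν ∧ uG ν = ustar :=
  stmt_12_general A hA b ustar hustar u uG hu hG ν hν hstag s hs2

end
end
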